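/- arXiv:2012.08999 — 5 statements merged into one kernel-verified Lean document; each statement's English description precedes it below -/
import Mathlib

section
/- Every countable discrete group admits a free continuous action on the Cantor set preserving a Borel probability measure. -/
open MeasureTheory Subgroup Topology TopologicalSpace

namespace CantorFreeProof

noncomputable section

/-! ### Generic instances and homeomorphism helpers -/

instance (n : ℕ) : IsTopologicalAddGroup (ZMod n) :=
  { continuous_add := continuous_of_discreteTopology
    continuous_neg := continuous_of_discreteTopology }

instance (n : ℕ) : BorelSpace (ZMod n) := ⟨borel_eq_top_of_discrete.symm⟩

instance (priority := 1100) (n : ℕ) [NeZero n] : SecondCountableTopology (ZMod n) :=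
  Finite.toSecondCountableTopology

/-- An equiv of discrete spaces is a homeomorphism. -/
def homeoOfDiscrete {α β : Type*} [TopologicalSpace α] [TopologicalSpace β]
    [DiscreteTopology α] [DiscreteTopology β] (e : α ≃ β) : α ≃ₜ β :=
  ⟨e, continuous_of_discreteTopology, continuous_of_discreteTopology⟩

/-- Currying as a homeomorphism. -/
def homeoCurry {α β X : Type*} [TopologicalSpace X] : (α × β → X) ≃ₜ (α → β → X) where
  toEquiv := Equiv.curry α β X
  continuous_toFun := continuous_pi fun a => continuous_pi fun b => continuous_apply (a, b)
  continuous_invFun := continuous_pi fun p => (continuous_apply p.2).comp (continuous_apply p.1)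

/-- Splitting a product over `Option J`. -/
def homeoPiOption {J : Type*} {X : Option J → Type*} [∀ o, TopologicalSpace (X o)] :
    (∀ o, X o) ≃ₜ X none × (∀ j, X (some j)) where
  toEquiv := Equiv.piOptionEquivProd
  continuous_toFun :=
    ((continuous_apply none)).prodMk (continuous_pi fun j => continuous_apply (some j))
  continuous_invFun := continuous_pi fun o => by
    cases o with
    | none => exact continuous_fst
    | some j => exact (continuous_apply j).comp continuous_snd

/-- A product of binary products splits. -/
def homeoPiProd {J : Type*} {A B : J → Type*} [∀ j, TopologicalSpace (A j)]
    [∀ j, TopologicalSpace (B j)] :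
    (∀ j, A j × B j) ≃ₜ (∀ j, A j) × (∀ j, B j) where
  toEquiv :=
    ⟨fun f => (fun j => (f j).1, fun j => (f j).2), fun p j => (p.1 j, p.2 j),
      fun f => rfl, fun p => rfl⟩
  continuous_toFun :=
    (continuous_pi fun j => continuous_fst.comp (continuous_apply j)).prodMk
      (continuous_pi fun j => continuous_snd.comp (continuous_apply j))
  continuous_invFun := continuous_pi fun j =>
    ((continuous_apply j).comp continuous_fst).prodMk ((continuous_apply j).comp continuous_snd)

/-- Sigma-currying as a homeomorphism. -/
def homeoSigmaCurry {ι : Type*} {κ : ι → Type*} {X : ∀ i, κ i → Type*}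
    [∀ i k, TopologicalSpace (X i k)] :
    (∀ p : Σ i, κ i, X p.1 p.2) ≃ₜ (∀ i, ∀ k, X i k) where
  toEquiv := ⟨fun f i k => f ⟨i, k⟩, fun h p => h p.1 p.2, fun f => rfl, fun h => rfl⟩
  continuous_toFun := continuous_pi fun i => continuous_pi fun k => continuous_apply _
  continuous_invFun := continuous_pi fun p => (continuous_apply p.2).comp (continuous_apply p.1)

/-- Any nonempty countable type crossed with `ℕ` is equivalent to `ℕ`. -/
def equivNat (ι : Type*) [Countable ι] [Nonempty ι] : (ι × ℕ) ≃ ℕ := by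
  haveI : Infinite (ι × ℕ) :=
    Infinite.of_injective (fun n => ((Classical.arbitrary ι : ι), n))
      (fun a b h => by simpa using congrArg Prod.snd h)
  haveI := Encodable.ofCountable (ι × ℕ)
  haveI := Denumerable.ofEncodableOfInfinite (ι × ℕ)
  exact Denumerable.eqv _

/-- Splitting off countably many Cantor factors from Cantor space. -/
def splitOff (J : Type*) [Countable J] :
    (ℕ → Bool) ≃ₜ ((ℕ → Bool) × (J → (ℕ → Bool))) :=
  (Homeomorph.piCongrLeft (Y := fun _ : ℕ => Bool) (equivNat (Option J))).symm.trans
    (homeoCurry.trans homeoPiOption)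

/-- The "cons" homeomorphism for Cantor space. -/
def consHomeo : (Bool × (ℕ → Bool)) ≃ₜ (ℕ → Bool) where
  toEquiv :=
    ⟨fun p n => Nat.casesOn n p.1 p.2, fun x => (x 0, fun n => x (n + 1)),
      fun p => rfl, fun x => funext fun n => by cases n <;> rfl⟩
  continuous_toFun := continuous_pi fun n => by
    cases n with
    | zero => exact continuous_fst
    | succ k => exact (continuous_apply k).comp continuous_snd
  continuous_invFun :=
    (continuous_apply 0).prodMk (continuous_pi fun n => continuous_apply (n + 1))

/-- A unique factor can be dropped. -/
def prodUniqueHomeo {X U : Type*} [TopologicalSpace X] [TopologicalSpace U] [Unique U] :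
    (X × U) ≃ₜ X where
  toEquiv := ⟨Prod.fst, fun x => (x, default),
    fun p => Prod.ext rfl (Subsingleton.elim _ _), fun _ => rfl⟩
  continuous_toFun := continuous_fst
  continuous_invFun := continuous_id.prodMk continuous_const

/-- Cantor space absorbs a disjoint copy of itself. -/
def sumSelf : ((ℕ → Bool) ⊕ (ℕ → Bool)) ≃ₜ (ℕ → Bool) :=
  (Homeomorph.sumCongr (prodUniqueHomeo.symm.trans (Homeomorph.prodComm _ _))
      (prodUniqueHomeo.symm.trans (Homeomorph.prodComm _ _))).trans <|
    ((Homeomorph.sumProdDistrib (X := Fin 1) (Y := Fin 1) (Z := (ℕ → Bool))).symm).trans <|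
      (Homeomorph.prodCongr
        (homeoOfDiscrete ((finSumFinEquiv (m := 1) (n := 1)).trans finTwoEquiv))
        (Homeomorph.refl _)).trans consHomeo

/-- Cantor space absorbs a `Fin 1` factor. -/
def prodFinOne : ((ℕ → Bool) × Fin 1) ≃ₜ (ℕ → Bool) := prodUniqueHomeo

/-- Cantor space absorbs any nonempty finite discrete factor `Fin (n+1)`. -/
def cantorFin : ∀ n : ℕ, ((ℕ → Bool) × Fin (n + 1)) ≃ₜ (ℕ → Bool)
  | 0 => prodFinOne
  | n + 1 =>
    (Homeomorph.prodCongr (Homeomorph.refl _)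
        (homeoOfDiscrete (finSumFinEquiv (m := n + 1) (n := 1)).symm)).trans <|
      (Homeomorph.prodComm _ _).trans <|
        Homeomorph.sumProdDistrib.trans <|
          (Homeomorph.sumCongr (Homeomorph.prodComm _ _) (Homeomorph.prodComm _ _)).trans <|
            (Homeomorph.sumCongr (cantorFin n) prodFinOne).trans sumSelf

/-- Cantor space absorbs any nonempty finite discrete factor. -/
def cantorFinite (F : Type*) [Finite F] [Nonempty F] [TopologicalSpace F] [DiscreteTopology F] :
    ((ℕ → Bool) × F) ≃ₜ (ℕ → Bool) := by
  have h := Finite.exists_equiv_fin F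
  have n := h.choose
  have e : F ≃ Fin h.choose := Classical.choice h.choose_spec
  rcases hn : h.choose with _ | m
  · rw [hn] at e
    exact ((e (Classical.arbitrary F)).elim0)
  · rw [hn] at e
    exact (Homeomorph.prodCongr (Homeomorph.refl _) (homeoOfDiscrete e)).trans (cantorFin m)

/-- Cantor space absorbs a countable product of nonempty finite discrete factors. -/
def cantorAbsorbPi (J : Type*) [Countable J] (F : J → Type*) [∀ j, Finite (F j)]
    [∀ j, Nonempty (F j)] [∀ j, TopologicalSpace (F j)] [∀ j, DiscreteTopology (F j)] :
    ((ℕ → Bool) × (∀ j, F j)) ≃ₜ (ℕ → Bool) :=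
  (Homeomorph.prodCongr (splitOff J) (Homeomorph.refl _)).trans <|
    (Homeomorph.prodAssoc _ _ _).trans <|
      (Homeomorph.prodCongr (Homeomorph.refl _) homeoPiProd.symm).trans <|
        (Homeomorph.prodCongr (Homeomorph.refl _)
            (Homeomorph.piCongrRight fun j => cantorFinite (F j))).trans <|
          (splitOff J).symm

/-- A countable nonempty power of Cantor space is Cantor space. -/
def cantorPow (ι : Type*) [Countable ι] [Nonempty ι] :
    (ι → (ℕ → Bool)) ≃ₜ (ℕ → Bool) :=
  homeoCurry.symm.trans (Homeomorph.piCongrLeft (Y := fun _ : ℕ => Bool) (equivNat ι))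

/-! ### The construction -/

variable {Γ : Type*} [Group Γ]

/-- The modulus attached to `s`. -/
def Mo (s : Γ) : ℕ := if orderOf s = 0 then 2 else orderOf s

instance (s : Γ) : NeZero (Mo s) := by
  constructor
  unfold Mo
  split
  · exact two_ne_zero
  · assumption

lemma Mo_eq_one_iff {s : Γ} : Mo s = 1 ↔ s = 1 := by
  unfold Mo
  split
  · next h => exact iff_of_false (by norm_num) (fun hs => by simp [hs] at h)
  · exact orderOf_eq_one_iff

lemma Mo_dvd_int (s : Γ) {z : ℤ} (h : (orderOf s : ℤ) ∣ z) : (Mo s : ℤ) ∣ z := by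
  unfold Mo
  split
  · next h0 =>
      rw [h0] at h
      norm_num at h
      simp [h]
  · exact h

lemma cast_eq_of_zpow_eq {s : Γ} {a b : ℤ} (h : s ^ a = s ^ b) :
    ((a : ℤ) : ZMod (Mo s)) = ((b : ℤ) : ZMod (Mo s)) := by
  have h1 : s ^ (a - b) = 1 := by simp [zpow_sub, h]
  have h2 : (orderOf s : ℤ) ∣ a - b := orderOf_dvd_iff_zpow_eq_one.mpr h1
  have h3 : (Mo s : ℤ) ∣ b - a := by
    have h4 := dvd_neg.mpr (Mo_dvd_int s h2)
    rwa [neg_sub] at h4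
  exact (ZMod.intCast_eq_intCast_iff a b _).mpr (Int.modEq_iff_dvd.mpr h3)

lemma exists_zpow (s g : Γ) :
    ∃ z : ℤ, s ^ z = ((g : Γ ⧸ zpowers s)).out⁻¹ * g := by
  have h : ((g : Γ ⧸ zpowers s)).out⁻¹ * g ∈ zpowers s :=
    QuotientGroup.eq.mp (QuotientGroup.out_eq' (g : Γ ⧸ zpowers s))
  exact mem_zpowers_iff.mp h

/-- Integer "position" of `g` inside its coset of `zpowers s`. -/
def rhoZ (s g : Γ) : ℤ := Classical.choose (exists_zpow s g)

lemma rhoZ_spec (s g : Γ) : s ^ rhoZ s g = ((g : Γ ⧸ zpowers s)).out⁻¹ * g :=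
  Classical.choose_spec (exists_zpow s g)

/-- Position of `g` in its coset, modulo `Mo s`. -/
def rho (s g : Γ) : ZMod (Mo s) := ((rhoZ s g : ℤ) : ZMod (Mo s))

lemma quot_mul (s g : Γ) : ((g * s : Γ) : Γ ⧸ zpowers s) = (g : Γ ⧸ zpowers s) := by
  rw [QuotientGroup.eq]
  have h : (g * s)⁻¹ * g = s⁻¹ := by group
  rw [h]
  exact inv_mem (mem_zpowers s)

lemma rho_mul (s g : Γ) : rho s (g * s) = rho s g + 1 := by
  have h1 : s ^ rhoZ s (g * s) = s ^ (rhoZ s g + 1) := by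
    rw [rhoZ_spec, quot_mul, zpow_add_one, rhoZ_spec]
    rw [mul_assoc]
  have h2 := cast_eq_of_zpow_eq h1
  rw [rho, rho, h2]
  push_cast
  ring

lemma iter_one {s : Γ} {f : Γ → ZMod (Mo s)} (hf : ∀ g, f (g * s) = f g + 1)
    (g : Γ) : ∀ z : ℤ, f (g * s ^ z) = f g + ((z : ℤ) : ZMod (Mo s)) := by
  intro z
  induction z using Int.induction_on with
  | zero => simp
  | succ n ih =>
      have h1 : g * s ^ ((n : ℤ) + 1) = g * s ^ (n : ℤ) * s := by
        rw [zpow_add_one, ← mul_assoc]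
      rw [h1, hf, ih]
      push_cast
      ring
  | pred n ih =>
      have h1 : g * s ^ (-(n : ℤ) - 1) * s = g * s ^ (-(n : ℤ)) := by
        rw [mul_assoc, ← zpow_add_one]
        norm_num
      have h2 := hf (g * s ^ (-(n : ℤ) - 1))
      rw [h1, ih] at h2
      have h3 : f (g * s ^ (-(n : ℤ) - 1)) = f g + ((-(n : ℤ) : ℤ) : ZMod (Mo s)) - 1 := by
        linear_combination -h2
      rw [h3]
      push_cast
      ring

variable (Γ) in
/-- The ambient compact abelian group of decorated colorings. -/
abbrev Amb : Type _ := Γ → (s : Γ) → ZMod (Mo s) × (ℕ → ZMod 2)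

variable (Γ) in
/-- The parameter space: a compact abelian group. -/
abbrev Bsp : Type _ :=
  ((s : Γ) → (Γ ⧸ zpowers s) → ZMod (Mo s)) × (Γ → Γ → ℕ → ZMod 2)

variable (Γ) in
/-- The set of admissible colorings. -/
def Yset : Set (Amb Γ) := {c | ∀ g s, (c (g * s) s).1 = (c g s).1 + 1}

/-- The shift action on the ambient space. -/
def shf (γ : Γ) : Amb Γ → Amb Γ := fun c g s => c (γ⁻¹ * g) s

/-- The parametrization of admissible colorings. -/
def phi : Bsp Γ → Amb Γ := fun b g s => (b.1 s (g : Γ ⧸ zpowers s) + rho s g, b.2 g s)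

/-- The inverse parametrization. -/
def psi : Amb Γ → Bsp Γ :=
  fun c => (fun s q => (c q.out s).1 - rho s q.out, fun g s => (c g s).2)

lemma psi_phi (b : Bsp Γ) : psi (phi b) = b := by
  refine Prod.ext ?_ rfl
  funext s q
  show b.1 s ((q.out : Γ ⧸ zpowers s)) + rho s q.out - rho s q.out = b.1 s q
  rw [QuotientGroup.out_eq' q]
  ring

lemma phi_inj : Function.Injective (phi (Γ := Γ)) :=
  Function.LeftInverse.injective psi_phi

lemma phi_mem (b : Bsp Γ) : phi b ∈ Yset Γ := by
  intro g s
  show b.1 s ((g * s : Γ) : Γ ⧸ zpowers s) + rho s (g * s) = b.1 s (g : Γ ⧸ zpowers s) + rho s g + 1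
  rw [quot_mul, rho_mul]
  ring

lemma shf_mem (γ : Γ) {c : Amb Γ} (hc : c ∈ Yset Γ) : shf γ c ∈ Yset Γ := by
  intro g s
  show (c (γ⁻¹ * (g * s)) s).1 = (c (γ⁻¹ * g) s).1 + 1
  rw [← mul_assoc]
  exact hc (γ⁻¹ * g) s

lemma phi_psi {c : Amb Γ} (hc : c ∈ Yset Γ) : phi (psi c) = c := by
  funext g s
  set o : Γ := ((g : Γ ⧸ zpowers s)).out with ho
  have hg : o * s ^ rhoZ s g = g := by
    rw [rhoZ_spec, ← ho]
    group
  refine Prod.ext ?_ rfl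
  show (c o s).1 - rho s o + rho s g = (c g s).1
  have e1 : (c g s).1 = (c o s).1 + ((rhoZ s g : ℤ) : ZMod (Mo s)) := by
    conv_lhs => rw [← hg]
    exact iter_one (f := fun x => (c x s).1) (fun g' => hc g' s) o (rhoZ s g)
  have e2 : rho s g = rho s o + ((rhoZ s g : ℤ) : ZMod (Mo s)) := by
    conv_lhs => rw [← hg]
    exact iter_one (rho_mul s) o (rhoZ s g)
  rw [e1, e2]
  ring

/-- The transported action on the parameter space. -/
def Tm (γ : Γ) : Bsp Γ → Bsp Γ := fun b => psi (shf γ (phi b))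

lemma shf_one : shf (1 : Γ) = id := by
  funext c g s
  show c ((1 : Γ)⁻¹ * g) s = c g s
  simp

lemma shf_comp (a b : Γ) (c : Amb Γ) : shf a (shf b c) = shf (a * b) c := by
  funext g s
  show c (b⁻¹ * (a⁻¹ * g)) s = c ((a * b)⁻¹ * g) s
  rw [mul_inv_rev, mul_assoc]

lemma Tm_one : Tm (1 : Γ) = id := by
  funext b
  show psi (shf 1 (phi b)) = b
  rw [shf_one]
  exact psi_phi b

lemma Tm_mul (a b : Γ) : Tm (a * b) = Tm a ∘ Tm b := by
  funext x
  show psi (shf (a * b) (phi x)) = psi (shf a (phi (psi (shf b (phi x)))))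
  rw [phi_psi (shf_mem b (phi_mem x)), shf_comp]

lemma phi_Tm (γ : Γ) (b : Bsp Γ) : phi (Tm γ b) = shf γ (phi b) :=
  phi_psi (shf_mem γ (phi_mem b))

lemma Tm_comp_inv (γ : Γ) (b : Bsp Γ) : Tm γ (Tm γ⁻¹ b) = b := by
  have h := congrFun (Tm_mul γ γ⁻¹) b
  rw [mul_inv_cancel, Tm_one] at h
  exact h.symm

lemma Tm_free {γ : Γ} {b : Bsp Γ} (h : Tm γ b = b) : γ = 1 := by
  have h2 : shf γ (phi b) = phi b := by
    have h3 := congrArg phi h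
    rwa [phi_Tm] at h3
  set c : Amb Γ := phi b with hc
  have hY : c ∈ Yset Γ := phi_mem b
  have e1 : (c γ⁻¹ γ⁻¹).1 = (c 1 γ⁻¹).1 := by
    have := congrFun (congrFun h2 (1 : Γ)) γ⁻¹
    show (c γ⁻¹ γ⁻¹).1 = (c 1 γ⁻¹).1
    rw [show c γ⁻¹ γ⁻¹ = c 1 γ⁻¹ from by
      have h4 : shf γ c (1 : Γ) γ⁻¹ = c 1 γ⁻¹ := congrFun (congrFun h2 (1 : Γ)) γ⁻¹
      rw [show shf γ c (1 : Γ) γ⁻¹ = c γ⁻¹ γ⁻¹ from by unfold shf; rw [mul_one]] at h4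
      exact h4]
  have e2 : (c (1 * γ⁻¹) γ⁻¹).1 = (c 1 γ⁻¹).1 + 1 := hY 1 γ⁻¹
  rw [one_mul, e1] at e2
  have e3 : (1 : ZMod (Mo γ⁻¹)) = 0 := left_eq_add.mp e2
  have e4 : ((1 : ℕ) : ZMod (Mo γ⁻¹)) = 0 := by exact_mod_cast e3
  have e5 : Mo γ⁻¹ ∣ 1 := (ZMod.natCast_eq_zero_iff 1 (Mo γ⁻¹)).mp e4
  have e6 : γ⁻¹ = 1 := Mo_eq_one_iff.mp (Nat.dvd_one.mp e5)
  exact inv_eq_one.mp e6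

lemma phi_addsub (x y z : Bsp Γ) : phi (x + y - z) = phi x + phi y - phi z := by
  funext g s
  refine Prod.ext ?_ ?_
  · show x.1 s _ + y.1 s _ - z.1 s _ + rho s g =
      x.1 s _ + rho s g + (y.1 s _ + rho s g) - (z.1 s _ + rho s g)
    ring
  · show x.2 g s + y.2 g s - z.2 g s = x.2 g s + y.2 g s - z.2 g s
    rfl

lemma shf_addsub (γ : Γ) (x y z : Amb Γ) :
    shf γ (x + y - z) = shf γ x + shf γ y - shf γ z := rfl

lemma Tm_affine (γ : Γ) (x y : Bsp Γ) : Tm γ (x + y) = Tm γ x + Tm γ y - Tm γ 0 := by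
  apply phi_inj
  rw [phi_addsub, phi_Tm, phi_Tm, phi_Tm, phi_Tm, ← shf_addsub]
  have h : phi (x + y) = phi x + phi y - phi (0 : Bsp Γ) := by
    simpa using phi_addsub x y (0 : Bsp Γ)
  rw [h]

lemma continuous_phi : Continuous (phi (Γ := Γ)) := by
  refine continuous_pi fun g => continuous_pi fun s => Continuous.prodMk ?_ ?_
  · exact (((continuous_apply ((g : Γ ⧸ zpowers s))).comp
      ((continuous_apply s).comp continuous_fst : Continuous fun b : Bsp Γ => b.1 s))).add
        continuous_const
  · exact (continuous_apply s).comp ((continuous_apply g).comp continuous_snd)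

lemma continuous_psi : Continuous (psi (Γ := Γ)) := by
  refine Continuous.prodMk ?_ ?_
  · refine continuous_pi fun s => continuous_pi fun q => Continuous.sub ?_ continuous_const
    exact continuous_fst.comp ((continuous_apply s).comp (continuous_apply q.out))
  · refine continuous_pi fun g => continuous_pi fun s => ?_
    exact continuous_snd.comp ((continuous_apply s).comp (continuous_apply g))

lemma continuous_shf (γ : Γ) : Continuous (shf (Γ := Γ) γ) :=
  continuous_pi fun g => continuous_pi fun s =>
    (continuous_apply s).comp (continuous_apply (γ⁻¹ * g))

lemma continuous_Tm (γ : Γ) : Continuous (Tm (Γ := Γ) γ) :=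
  continuous_psi.comp ((continuous_shf γ).comp continuous_phi)

instance quotCountable [Countable Γ] (s : Γ) : Countable (Γ ⧸ zpowers s) :=
  Quotient.countable

/-! ### The invariant measure -/

section Meas

variable [Countable Γ]

/-- The Haar probability measure on the parameter space. -/
abbrev muB : Measure (Bsp Γ) :=
  Measure.addHaarMeasure (⊤ : PositiveCompacts (Bsp Γ))

instance : IsProbabilityMeasure (muB (Γ := Γ)) := by
  constructor
  rw [muB, ← PositiveCompacts.coe_top (α := Bsp Γ)]
  exact Measure.addHaarMeasure_self

lemma Tm_map_muB (γ : Γ) : (muB (Γ := Γ)).map (Tm γ) = muB := by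
  have hTmeas : ∀ δ : Γ, Measurable (Tm (Γ := Γ) δ) := fun δ => (continuous_Tm δ).measurable
  set ν : Measure (Bsp Γ) := (muB (Γ := Γ)).map (Tm γ) with hν
  haveI : IsProbabilityMeasure ν := Measure.isProbabilityMeasure_map (hTmeas γ).aemeasurable
  haveI : ν.IsAddLeftInvariant := by
    constructor
    intro x
    set w : Bsp Γ := Tm γ⁻¹ (x + Tm γ 0) with hw
    have key : ∀ b : Bsp Γ, x + Tm γ b = Tm γ (b + w) := by
      intro b
      rw [Tm_affine, Tm_comp_inv]
      abel
    have m1 : Measurable fun b : Bsp Γ => x + b :=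
      (continuous_const.add continuous_id).measurable
    have m2 : Measurable fun b : Bsp Γ => b + w :=
      (continuous_id.add continuous_const).measurable
    rw [hν, Measure.map_map m1 (hTmeas γ)]
    have hcomp : ((fun b : Bsp Γ => x + b) ∘ Tm γ) = Tm γ ∘ (fun b => b + w) :=
      funext fun b => key b
    rw [hcomp, ← Measure.map_map (hTmeas γ) m2]
    have hright : (muB (Γ := Γ)).map (fun b => b + w) = muB := by
      have : (fun b : Bsp Γ => b + w) = fun b => w + b := funext fun b => add_comm b w
      rw [this]
      exact map_add_left_eq_self (muB (Γ := Γ)) w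
    rw [hright]
  have h1 := Measure.addHaarMeasure_unique ν (⊤ : PositiveCompacts (Bsp Γ))
  have h2 : ν (⊤ : PositiveCompacts (Bsp Γ)) = 1 := by
    rw [PositiveCompacts.coe_top]
    exact measure_univ
  rw [h1, h2, one_smul, muB]

end Meas

/-! ### The homeomorphism with Cantor space -/

section Homeo

variable [Countable Γ]

/-- The parameter space is homeomorphic to Cantor space. -/
def cantorHomeo : Bsp Γ ≃ₜ (ℕ → Bool) := by
  have e2 : ZMod 2 ≃ Bool :=
    ⟨fun x => decide (x = 1), fun b => cond b 1 0, by decide, by decide⟩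
  refine (Homeomorph.prodCongr
      (homeoSigmaCurry (ι := Γ) (κ := fun s => Γ ⧸ zpowers s)
        (X := fun s _ => ZMod (Mo s))).symm
      ((Homeomorph.piCongrRight fun _ : Γ =>
        (Homeomorph.piCongrRight fun _ : Γ =>
          (Homeomorph.piCongrRight fun _ : ℕ => homeoOfDiscrete e2).trans
            (Homeomorph.refl _)).trans (cantorPow Γ)).trans (cantorPow Γ))).trans ?_
  refine (Homeomorph.prodComm _ _).trans ?_
  exact cantorAbsorbPi (Σ s : Γ, Γ ⧸ zpowers s) (fun j => ZMod (Mo j.1))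

end Homeo

end

end CantorFreeProof

/-- Every countable discrete group admits a free continuous action on the
Cantor set (realized here as the Cantor space `ℕ → Bool`) preserving a Borel probability
measure. -/
theorem exists_free_continuous_measure_preserving_action_on_cantor
    (Γ : Type*) [Group Γ] [Countable Γ] :
    ∃ act : Γ → (ℕ → Bool) → (ℕ → Bool),
      (∀ γ : Γ, Continuous (act γ)) ∧
      act 1 = id ∧
      (∀ a b : Γ, act (a * b) = act a ∘ act b) ∧
      (∀ γ : Γ, ∀ x : ℕ → Bool, act γ x = x → γ = 1) ∧
      ∃ μ : MeasureTheory.Measure (ℕ → Bool),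
        MeasureTheory.IsProbabilityMeasure μ ∧
        ∀ γ : Γ, MeasureTheory.Measure.map (act γ) μ = μ := by
  classical
  open CantorFreeProof MeasureTheory in
  refine ?_
  let E : Bsp Γ ≃ₜ (ℕ → Bool) := cantorHomeo
  let act : Γ → (ℕ → Bool) → (ℕ → Bool) := fun γ x => E (Tm γ (E.symm x))
  have hEm : Measurable (⇑E) := E.continuous.measurable
  have hEsm : Measurable (⇑E.symm) := E.symm.continuous.measurable
  have hTmeas : ∀ γ : Γ, Measurable (Tm (Γ := Γ) γ) := fun γ => (continuous_Tm γ).measurable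
  refine ⟨act, ?_, ?_, ?_, ?_, ?_⟩
  · intro γ
    exact E.continuous.comp ((continuous_Tm γ).comp E.symm.continuous)
  · funext x
    show E (Tm 1 (E.symm x)) = x
    rw [Tm_one]
    exact E.apply_symm_apply x
  · intro a b
    funext x
    simp only [act, Function.comp_apply]
    rw [E.symm_apply_apply, Tm_mul]
    rfl
  · intro γ x hx
    have h1 : Tm γ (E.symm x) = E.symm x := by
      have := congrArg E.symm hx
      rwa [E.symm_apply_apply] at this
    exact Tm_free h1
  · refine ⟨(muB (Γ := Γ)).map ⇑E, ?_, ?_⟩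
    · exact Measure.isProbabilityMeasure_map hEm.aemeasurable
    · intro γ
      have hact : Measurable (act γ) :=
        (E.continuous.comp ((continuous_Tm γ).comp E.symm.continuous)).measurable
      rw [Measure.map_map hact hEm]
      have hcomp : (act γ ∘ ⇑E) = ⇑E ∘ Tm γ := by
        funext b
        show E (Tm γ (E.symm (E b))) = E (Tm γ b)
        rw [E.symm_apply_apply]
      rw [hcomp, ← Measure.map_map hEm (hTmeas γ), Tm_map_muB]
end

section
/- For a Cantor set X, the abelian group C(X; ℤ) of continuous integer-valued functions on X is a free abelian group. -/
/-- For a Cantor set `X` (nonempty compact metrizable totally disconnected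
perfect space), the abelian group `C(X; ℤ)` of continuous integer-valued functions on `X`
(with `ℤ` discrete) is a free abelian group. -/
theorem continuousFunctions_int_free_of_cantor
    (X : Type*) [TopologicalSpace X] [Nonempty X] [CompactSpace X]
    [TopologicalSpace.MetrizableSpace X] [TotallyDisconnectedSpace X] [PerfectSpace X] :
    Module.Free ℤ C(X, ℤ) := by
  letI := TopologicalSpace.metrizableSpaceMetric X
  let S : Profinite := Profinite.of X
  let e : LocallyConstant S ℤ ≃ₗ[ℤ] C(X, ℤ) :=
    { toFun := fun f => ⟨f, f.continuous⟩
      invFun := fun f => ⟨f, (IsLocallyConstant.iff_continuous f).mpr f.continuous⟩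
      left_inv := fun f => rfl
      right_inv := fun f => rfl
      map_add' := fun f g => rfl
      map_smul' := fun c f => rfl }
  haveI := LocallyConstant.freeOfProfinite S
  exact Module.Free.of_equiv e
end

section
/- Let Γ be a group acting freely by homeomorphisms on a compact metric space (X, d), and let F ⊆ Γ be a finite set of nontrivial elements. Then there exists a finite partition X = A₁ ∪ ⋯ ∪ A_r into clopen sets such that γA_i ∩ A_i = ∅ for every γ ∈ F and every i, provided X is totally disconnected. -/
/-- Let a group `Γ` act freely by homeomorphisms on a compact, totally
disconnected metric space `X`, and let `F ⊆ Γ` be a finite set of nontrivial elements.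
Then there is a finite partition `X = A₁ ∪ ⋯ ∪ A_r` into clopen sets such that
`γ Aᵢ ∩ Aᵢ = ∅` for every `γ ∈ F` and every `i`. -/
theorem exists_clopen_partition_disjoint_from_translates
    (Γ X : Type*) [Group Γ] [MetricSpace X] [CompactSpace X]
    [TotallyDisconnectedSpace X] [MulAction Γ X]
    (hcont : ∀ γ : Γ, Continuous fun x : X => γ • x)
    (hfree : ∀ (γ : Γ) (x : X), γ • x = x → γ = 1)
    (F : Finset Γ) (hF : ∀ γ ∈ F, γ ≠ (1 : Γ)) :
    ∃ (r : ℕ) (A : Fin r → Set X),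
      (∀ i, IsClopen (A i)) ∧
      (⋃ i, A i) = Set.univ ∧
      (∀ i j, i ≠ j → Disjoint (A i) (A j)) ∧
      (∀ γ ∈ F, ∀ i, Disjoint ((fun x : X => γ • x) '' A i) (A i)) := by
  classical
  -- Step 1: for every point, find a clopen neighborhood disjoint from its F-translates.
  have key : ∀ x : X, ∃ V : Set X, IsClopen V ∧ x ∈ V ∧
      ∀ γ ∈ F, Disjoint ((fun y : X => γ • y) '' V) V := by
    intro x
    have hγ : ∀ γ : Γ, ∃ W : Set X, IsOpen W ∧ x ∈ W ∧
        (γ ∈ F → Disjoint ((fun y : X => γ • y) '' W) W) := by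
      intro γ
      by_cases hγF : γ ∈ F
      · have hne : γ • x ≠ x := fun h => hF γ hγF (hfree γ x h)
        obtain ⟨u, v, hu, hv, hxu, hxv, huv⟩ := t2_separation hne
        refine ⟨v ∩ (fun y : X => γ • y) ⁻¹' u,
          hv.inter (hu.preimage (hcont γ)), ⟨hxv, hxu⟩, fun _ => ?_⟩
        rw [Set.disjoint_left]
        rintro z ⟨w, ⟨_, hwu⟩, rfl⟩ ⟨hzv, _⟩
        exact Set.disjoint_left.mp huv hwu hzv
      · exact ⟨Set.univ, isOpen_univ, trivial, fun h => absurd h hγF⟩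
    choose W hWopen hxW hWdisj using hγ
    have hopen : IsOpen (⋂ γ ∈ F, W γ) := isOpen_biInter_finset fun γ _ => hWopen γ
    have hxmem : x ∈ ⋂ γ ∈ F, W γ := Set.mem_biInter fun γ _ => hxW γ
    obtain ⟨V, hVclopen, hxV, hVsub⟩ := compact_exists_isClopen_in_isOpen hopen hxmem
    refine ⟨V, hVclopen, hxV, fun γ hγF => ?_⟩
    have hVW : V ⊆ W γ := hVsub.trans (Set.biInter_subset_of_mem hγF)
    exact ((hWdisj γ hγF).mono (Set.image_mono hVW) hVW)
  choose V hVclopen hxV hVdisj using key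
  -- Step 2: compactness gives a finite subcover.
  obtain ⟨t, ht⟩ := isCompact_univ.elim_finite_subcover V
    (fun x => (hVclopen x).2) (fun x _ => Set.mem_iUnion.2 ⟨x, hxV x⟩)
  set r := t.card with hr
  let e : Fin r ≃ t := t.equivFin.symm
  let U : Fin r → Set X := fun i => V (e i : X)
  -- Disjointify.
  let A : Fin r → Set X := fun i => U i \ ⋃ j ∈ Finset.Iio i, U j
  have hAsub : ∀ i, A i ⊆ U i := fun i => Set.diff_subset
  have hAclopen : ∀ i, IsClopen (A i) := by
    intro i
    exact IsClopen.diff (hVclopen _)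
      (isClopen_biUnion_finset fun j _ => hVclopen _)
  refine ⟨r, A, hAclopen, ?_, ?_, ?_⟩
  · -- cover
    apply Set.eq_univ_of_forall
    intro x
    have hx : x ∈ ⋃ y ∈ t, V y := ht (Set.mem_univ x)
    obtain ⟨y, hyt, hxy⟩ := Set.mem_iUnion₂.1 hx
    have hne : (Finset.univ.filter (fun i : Fin r => x ∈ U i)).Nonempty :=
      ⟨e.symm ⟨y, hyt⟩, by
        simp only [Finset.mem_filter, Finset.mem_univ, true_and, U]
        rw [Equiv.apply_symm_apply]; exact hxy⟩
    set i := (Finset.univ.filter (fun i : Fin r => x ∈ U i)).min' hne with hi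
    have hxi : x ∈ U i := by
      have := (Finset.univ.filter (fun i : Fin r => x ∈ U i)).min'_mem hne
      simpa using this
    refine Set.mem_iUnion.2 ⟨i, hxi, ?_⟩
    intro hmem
    obtain ⟨j, hj, hxj⟩ := Set.mem_iUnion₂.1 hmem
    rw [Finset.mem_Iio] at hj
    have : i ≤ j := Finset.min'_le _ j (by simp [hxj])
    exact absurd hj (not_lt.2 this)
  · -- pairwise disjoint
    intro i j hij
    rcases hij.lt_or_gt with h | h
    · rw [Set.disjoint_left]
      intro x hxi hxj
      exact hxj.2 (Set.mem_iUnion₂.2 ⟨i, Finset.mem_Iio.2 h, hxi.1⟩)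
    · rw [Set.disjoint_right]
      intro x hxj hxi
      exact hxi.2 (Set.mem_iUnion₂.2 ⟨j, Finset.mem_Iio.2 h, hxj.1⟩)
  · -- disjoint from translates
    intro γ hγF i
    exact (hVdisj _ γ hγF).mono (Set.image_mono (hAsub i)) (hAsub i)
end

section
/- Let H be a finite subgroup of a group Γ, let χ : H → {±1} be a character, and let X be a Cantor set with a free Γ-action by homeomorphisms such that C(X;ℤ) is a free abelian group and there exists a clopen fundamental domain A for the H-action on X. Then the ℤ[Γ]-module C(X;ℤ) ⊗_ℤ (ℤ[Γ] ⊗_{ℤ[H]} ℤ^χ), with Γ acting diagonally, is a free ℤ[Γ]-module. -/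
noncomputable section

/-- The `Γ`-action on `C(X; ℤ)` given by `(γ • f) x = f (γ⁻¹ • x)`. -/
def smulC {Γ X : Type*} [Group Γ] [TopologicalSpace X] [MulAction Γ X]
    (hcont : ∀ γ : Γ, Continuous fun x : X => γ • x) (γ : Γ) (f : C(X, ℤ)) : C(X, ℤ) :=
  f.comp ⟨fun x => γ⁻¹ • x, hcont γ⁻¹⟩

/-- The abelian group `C(X;ℤ) ⊗_ℤ (ℤ[Γ] ⊗_{ℤ[H]} ℤ^χ)`, realized concretely as the group of
functions `u : Γ → C(X;ℤ)` supported on finitely many cosets of `H` and satisfying the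
`χ`-twisted equivariance `u (g * h) = χ(h) • u g` for `h ∈ H`. -/
def IndMod {Γ X : Type*} [Group Γ] [TopologicalSpace X] (H : Subgroup Γ) (χ : H →* ℤˣ) :
    AddSubgroup (Γ → C(X, ℤ)) where
  carrier := {u | (∀ (g : Γ) (h : H), u (g * (h : Γ)) = ((χ h : ℤ) • u g)) ∧
    (((QuotientGroup.mk : Γ → Γ ⧸ H) '' {g : Γ | u g ≠ 0}).Finite)}
  add_mem' := by
    rintro u v ⟨hu1, hu2⟩ ⟨hv1, hv2⟩
    refine ⟨fun g h => by simp only [Pi.add_apply, hu1 g h, hv1 g h, smul_add], ?_⟩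
    refine Set.Finite.subset (hu2.union hv2) ?_
    rw [← Set.image_union]
    refine Set.image_mono ?_
    intro g hg
    simp only [Set.mem_union, Set.mem_setOf_eq] at hg ⊢
    by_contra hc
    push_neg at hc
    exact hg (by simp [Pi.add_apply, hc.1, hc.2])
  zero_mem' := by
    refine ⟨fun g h => by simp, ?_⟩
    convert Set.finite_empty
    simp
  neg_mem' := by
    rintro u ⟨hu1, hu2⟩
    refine ⟨fun g h => by simp only [Pi.neg_apply, hu1 g h, smul_neg], ?_⟩
    refine hu2.subset (Set.image_mono ?_)
    intro g hg
    simp only [Set.mem_setOf_eq, Pi.neg_apply, ne_eq, neg_eq_zero] at hg ⊢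
    exact hg

/-- The diagonal `Γ`-action on `IndMod`: `(γ • u) g = γ • (u (γ⁻¹ g))`. -/
def diagActInd {Γ X : Type*} [Group Γ] [TopologicalSpace X] [MulAction Γ X]
    (hcont : ∀ γ : Γ, Continuous fun x : X => γ • x) (γ : Γ)
    (u : Γ → C(X, ℤ)) : Γ → C(X, ℤ) :=
  fun g => smulC hcont γ (u (γ⁻¹ * g))

/-- The left translation `Γ`-action on the free `ℤ[Γ]`-module `⊕_ι ℤ[Γ] = ((ι × Γ) →₀ ℤ)`. -/
def transAct {Γ : Type*} [Group Γ] (ι : Type) (γ : Γ)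
    (G : (ι × Γ) →₀ ℤ) : (ι × Γ) →₀ ℤ :=
  Finsupp.equivMapDomain (Equiv.prodCongr (Equiv.refl ι) (Equiv.mulLeft γ)) G

namespace Stmt15Aux

open Classical in
/-- Extension by zero, as a bare function. -/
noncomputable def extendFun {X : Type*} [TopologicalSpace X] (A : Set X) (f : C(A, ℤ)) : X → ℤ :=
  fun x => if h : x ∈ A then f ⟨x, h⟩ else 0

lemma extendFun_apply_mem {X : Type*} [TopologicalSpace X] (A : Set X) (f : C(A, ℤ)) {x : X} (hx : x ∈ A) :
    extendFun A f x = f ⟨x, hx⟩ := by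
  unfold extendFun
  exact dif_pos hx

lemma extendFun_apply_not_mem {X : Type*} [TopologicalSpace X] (A : Set X) (f : C(A, ℤ)) {x : X} (hx : x ∉ A) :
    extendFun A f x = 0 := by
  unfold extendFun
  exact dif_neg hx

section SmulC

variable {Γ X : Type*} [Group Γ] [TopologicalSpace X] [MulAction Γ X]
variable (hcont : ∀ γ : Γ, Continuous fun x : X => γ • x)

lemma smulC_apply (γ : Γ) (f : C(X, ℤ)) (x : X) : smulC hcont γ f x = f (γ⁻¹ • x) := rfl

lemma smulC_add (γ : Γ) (f g : C(X, ℤ)) :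
    smulC hcont γ (f + g) = smulC hcont γ f + smulC hcont γ g := rfl

lemma smulC_zsmul (γ : Γ) (n : ℤ) (f : C(X, ℤ)) :
    smulC hcont γ (n • f) = n • smulC hcont γ f := rfl

lemma smulC_smulC (γ δ : Γ) (f : C(X, ℤ)) :
    smulC hcont γ (smulC hcont δ f) = smulC hcont (γ * δ) f := by
  ext x
  simp only [smulC_apply, mul_inv_rev, mul_smul]

lemma smulC_eq_zero_iff {γ : Γ} {f : C(X, ℤ)} : smulC hcont γ f = 0 ↔ f = 0 := by
  constructor
  · intro h
    ext x
    have := ContinuousMap.congr_fun h (γ • x)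
    simpa [smulC_apply, inv_smul_smul] using this
  · rintro rfl
    rfl

variable {A : Set X}

lemma continuous_extendFun (hA : IsClopen A) (f : C(A, ℤ)) : Continuous (extendFun A f) := by
  classical
  rw [← IsLocallyConstant.iff_continuous]
  intro s
  have h1 : IsOpen {a : A | f a ∈ s} :=
    f.continuous.isOpen_preimage s (isOpen_discrete s)
  have h2 : IsOpen ((Subtype.val '' {a : A | f a ∈ s}) ∪ (if (0 : ℤ) ∈ s then Aᶜ else ∅)) := by
    refine (hA.isOpen.isOpenMap_subtype_val _ h1).union ?_
    split_ifs
    · exact hA.isClosed.isOpen_compl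
    · exact isOpen_empty
  convert h2 using 1
  ext x
  by_cases hx : x ∈ A
  · simp only [Set.mem_preimage, extendFun_apply_mem A f hx, Set.mem_union, Set.mem_image,
      Set.mem_setOf_eq]
    constructor
    · intro h; exact Or.inl ⟨⟨x, hx⟩, h, rfl⟩
    · rintro (⟨a, ha, rfl⟩ | h)
      · exact ha
      · exfalso
        split_ifs at h with h0
        · exact absurd hx (by simpa using h)
        · simp at h
  · simp only [Set.mem_preimage, extendFun_apply_not_mem A f hx, Set.mem_union, Set.mem_image,
      Set.mem_setOf_eq]
    constructor
    · intro h
      refine Or.inr ?_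
      rw [if_pos h]
      exact hx
    · rintro (⟨a, _, rfl⟩ | h)
      · exact absurd a.2 hx
      · split_ifs at h with h0
        · exact h0
        · simp at h

/-- Extension by zero of a continuous function on a clopen set. -/
noncomputable def extendZero (hA : IsClopen A) (f : C(A, ℤ)) : C(X, ℤ) :=
  ⟨extendFun A f, continuous_extendFun hA f⟩

lemma extendZero_apply_mem (hA : IsClopen A) (f : C(A, ℤ)) {x : X} (hx : x ∈ A) :
    extendZero hA f x = f ⟨x, hx⟩ := extendFun_apply_mem A f hx

lemma extendZero_apply_not_mem (hA : IsClopen A) (f : C(A, ℤ)) {x : X}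
    (hx : x ∉ A) : extendZero hA f x = 0 := extendFun_apply_not_mem A f hx

end SmulC

end Stmt15Aux
namespace Stmt15Aux

lemma small_of_compact_metrizable (X : Type*) [TopologicalSpace X] [CompactSpace X]
    [TopologicalSpace.MetrizableSpace X] : Small.{0} X := by
  letI : MetricSpace X := TopologicalSpace.metrizableSpaceMetric X
  obtain ⟨s, hsc, hsd⟩ := TopologicalSpace.exists_countable_dense X
  haveI := hsc.to_subtype
  refine small_of_injective (f := fun (x : X) (d : s) => dist x (d : X)) ?_
  intro x y hxy
  by_contra hne
  have hpos : 0 < dist x y := dist_pos.mpr hne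
  obtain ⟨d, hd, hdist⟩ := Metric.mem_closure_iff.mp (hsd x) (dist x y / 2) (by linarith)
  have h1 : dist x d = dist y d := by
    have := congrFun hxy ⟨d, hd⟩
    simpa using this
  have h2 : dist x y ≤ dist x d + dist d y := dist_triangle x d y
  rw [dist_comm d y, ← h1] at h2
  linarith

section Main

variable {Γ : Type*} [Group Γ] {H : Subgroup Γ} {χ : H →* ℤˣ}
variable {X : Type*} [TopologicalSpace X] [MulAction Γ X]
variable (hcont : ∀ γ : Γ, Continuous fun x : X => γ • x)
variable (A : Set X)

/-- The untwisted coefficient of `u` at `g`: the restriction to `A` of `g⁻¹ • u g`. -/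
noncomputable def wmap (u : Γ → C(X, ℤ)) (g : Γ) : C(A, ℤ) :=
  (smulC hcont g⁻¹ (u g)).comp ⟨Subtype.val, continuous_subtype_val⟩

lemma wmap_apply (u : Γ → C(X, ℤ)) (g : Γ) (a : A) :
    wmap hcont A u g a = u g (g • (a : X)) := by
  simp [wmap, smulC_apply]

lemma wmap_add (u v : Γ → C(X, ℤ)) (g : Γ) :
    wmap hcont A (u + v) g = wmap hcont A u g + wmap hcont A v g := rfl

lemma wmap_eq_zero {u : Γ → C(X, ℤ)} {g : Γ} (h : u g = 0) : wmap hcont A u g = 0 := by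
  ext a
  simp [wmap_apply, h]

lemma mem_indMod_iff {u : Γ → C(X, ℤ)} :
    u ∈ IndMod H χ ↔ (∀ (g : Γ) (h : H), u (g * (h : Γ)) = ((χ h : ℤ) • u g)) ∧
      (((QuotientGroup.mk : Γ → Γ ⧸ H) '' {g : Γ | u g ≠ 0}).Finite) := Iff.rfl

lemma finiteSupp [Finite H] {u : Γ → C(X, ℤ)} (hu : u ∈ IndMod H χ) :
    {g : Γ | u g ≠ 0}.Finite := by
  have h2 := (mem_indMod_iff.mp hu).2
  have hsub : {g : Γ | u g ≠ 0} ⊆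
      ⋃ q ∈ ((QuotientGroup.mk : Γ → Γ ⧸ H) '' {g : Γ | u g ≠ 0}),
        ((QuotientGroup.mk : Γ → Γ ⧸ H) ⁻¹' {q}) := by
    intro g hg
    exact Set.mem_biUnion (Set.mem_image_of_mem _ hg) rfl
  refine Set.Finite.subset (h2.biUnion ?_) hsub
  intro q _
  obtain ⟨g₀, rfl⟩ := QuotientGroup.mk_surjective q
  refine (Set.finite_range (fun h : H => g₀ * (h : Γ))).subset ?_
  intro g hg
  have : (QuotientGroup.mk g : Γ ⧸ H) = QuotientGroup.mk g₀ := hg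
  have hmem : g₀⁻¹ * g ∈ H := QuotientGroup.eq.mp this.symm
  exact ⟨⟨g₀⁻¹ * g, hmem⟩, by simp⟩

variable {ι : Type} (β : Module.Basis ι ℤ C(A, ℤ))

open Classical in
/-- The map `IndMod H χ → (ι × Γ) →₀ ℤ`. -/
noncomputable def phi [Finite H] (u : (IndMod H χ : AddSubgroup (Γ → C(X, ℤ)))) :
    (ι × Γ) →₀ ℤ :=
  Finsupp.onFinset
    ((finiteSupp u.2).toFinset.biUnion fun g =>
      (β.repr (wmap hcont A u.1 g)).support.image fun i => (i, g))
    (fun p => β.repr (wmap hcont A u.1 p.2) p.1)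
    (by
      rintro ⟨i, g⟩ hne
      simp only [Finset.mem_biUnion, Set.Finite.mem_toFinset, Set.mem_setOf_eq,
        Finset.mem_image]
      refine ⟨g, ?_, i, Finsupp.mem_support_iff.mpr hne, rfl⟩
      intro h0
      refine hne ?_
      show β.repr (wmap hcont A u.1 g) i = 0
      rw [wmap_eq_zero hcont A h0]
      simp)

lemma phi_apply [Finite H] (u : (IndMod H χ : AddSubgroup (Γ → C(X, ℤ)))) (p : ι × Γ) :
    phi hcont A β u p = β.repr (wmap hcont A u.1 p.2) p.1 := rfl

/-- `phi` as an additive monoid hom. -/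
noncomputable def phiHom [Finite H] :
    (IndMod H χ : AddSubgroup (Γ → C(X, ℤ))) →+ ((ι × Γ) →₀ ℤ) :=
  AddMonoidHom.mk' (phi hcont A β) (by
    intro u v
    ext p
    simp only [Finsupp.coe_add, Pi.add_apply, phi_apply]
    rw [show ((u + v : (IndMod H χ : AddSubgroup (Γ → C(X, ℤ)))) : Γ → C(X, ℤ))
        = (u : Γ → C(X, ℤ)) + (v : Γ → C(X, ℤ)) from rfl, wmap_add, map_add]
    rfl)

end Main

end Stmt15Aux
namespace Stmt15Aux

section Main2

variable {Γ : Type*} [Group Γ] {H : Subgroup Γ} {χ : H →* ℤˣ}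
variable {X : Type*} [TopologicalSpace X] [MulAction Γ X]
variable (hcont : ∀ γ : Γ, Continuous fun x : X => γ • x)
variable {A : Set X} {ι : Type}

lemma phi_injective [Finite H] (β : Module.Basis ι ℤ C(A, ℤ))
    (hAf : ∀ x : X, ∃! h : H, (h : Γ) • x ∈ A) :
    Function.Injective (phiHom (H := H) (χ := χ) hcont A β) := by
  refine (injective_iff_map_eq_zero (phiHom (H := H) (χ := χ) hcont A β)).mpr ?_
  intro u hu0
  have hw : ∀ g : Γ, wmap hcont A u.1 g = 0 := by
    intro g
    have hr : β.repr (wmap hcont A u.1 g) = 0 := by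
      ext i
      have := DFunLike.congr_fun hu0 (i, g)
      simpa [phiHom, phi_apply] using this
    exact (LinearEquiv.map_eq_zero_iff β.repr).mp hr
  ext g x
  show u.1 g x = 0
  obtain ⟨h, hh, -⟩ := hAf (g⁻¹ • x)
  have h1 := (mem_indMod_iff.mp u.2).1 (g * (h : Γ)⁻¹) h
  rw [inv_mul_cancel_right] at h1
  have hx : (g * (h : Γ)⁻¹) • ((h : Γ) • (g⁻¹ • x)) = x := by
    rw [smul_smul, smul_smul]
    rw [show g * (↑h)⁻¹ * ↑h * g⁻¹ = 1 by group, one_smul]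
  have h2 : u.1 (g * (h : Γ)⁻¹) x = 0 := by
    have := ContinuousMap.congr_fun (hw (g * (h : Γ)⁻¹)) ⟨(h : Γ) • (g⁻¹ • x), hh⟩
    rw [wmap_apply] at this
    simpa [hx] using this
  rw [h1]
  simp [h2]

open Classical in
/-- The generator of `IndMod H χ` corresponding to `(i, g)`. -/
noncomputable def genU (hA : IsClopen A) (β : Module.Basis ι ℤ C(A, ℤ)) (i : ι) (g : Γ) :
    Γ → C(X, ℤ) :=
  fun g' => if h' : g⁻¹ * g' ∈ H then
    ((χ ⟨g⁻¹ * g', h'⟩ : ℤˣ) : ℤ) • smulC hcont g (extendZero hA (β i)) else 0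

lemma genU_mem (hA : IsClopen A) (β : Module.Basis ι ℤ C(A, ℤ)) (i : ι) (g : Γ) :
    genU (χ := χ) hcont hA β i g ∈ IndMod H χ := by
  classical
  constructor
  · intro g' h
    by_cases hm : g⁻¹ * g' ∈ H
    · have hm2 : g⁻¹ * (g' * (h : Γ)) ∈ H := by
        rw [← mul_assoc]
        exact H.mul_mem hm h.2
      rw [genU, dif_pos hm2, genU, dif_pos hm]
      have he : (⟨g⁻¹ * (g' * (h : Γ)), hm2⟩ : H) = ⟨g⁻¹ * g', hm⟩ * h := by
        ext
        simp [mul_assoc]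
      rw [he, map_mul, Units.val_mul, smul_smul, mul_comm]
    · have hm2 : ¬ g⁻¹ * (g' * (h : Γ)) ∈ H := by
        intro hc
        refine hm ?_
        have := H.mul_mem hc (H.inv_mem h.2)
        simpa [mul_assoc] using this
      rw [genU, dif_neg hm2, genU, dif_neg hm, smul_zero]
  · refine Set.Finite.subset (Set.finite_singleton (QuotientGroup.mk g : Γ ⧸ H)) ?_
    rintro q ⟨g', hg', rfl⟩
    simp only [Set.mem_setOf_eq] at hg'
    have hm : g⁻¹ * g' ∈ H := by
      by_contra hc
      exact hg' (by rw [genU, dif_neg hc])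
    simp only [Set.mem_singleton_iff]
    exact (QuotientGroup.eq.mpr hm).symm

lemma phi_genU [Finite H] (hA : IsClopen A) (β : Module.Basis ι ℤ C(A, ℤ))
    (hAf : ∀ x : X, ∃! h : H, (h : Γ) • x ∈ A) (i : ι) (g : Γ) :
    phiHom hcont A β ⟨genU (χ := χ) hcont hA β i g, genU_mem hcont hA β i g⟩
      = Finsupp.single (i, g) 1 := by
  classical
  ext ⟨j, g'⟩
  show β.repr (wmap hcont A (genU (χ := χ) hcont hA β i g) g') j
      = Finsupp.single (i, g) 1 (j, g')
  by_cases hm : g⁻¹ * g' ∈ H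
  · by_cases hg : g' = g
    · subst hg
      have h1 : (⟨g'⁻¹ * g', hm⟩ : H) = 1 := by
        ext
        simp
      have hwg : wmap hcont A (genU (χ := χ) hcont hA β i g') g' = β i := by
        ext a
        rw [wmap_apply, genU, dif_pos hm, h1]
        simp only [map_one, Units.val_one, one_smul]
        rw [smulC_apply]
        rw [inv_smul_smul]
        rw [extendZero_apply_mem hA (β i) a.2]
      rw [hwg]
      simp [Finsupp.single_apply, Prod.ext_iff]
    · -- g' in the coset but different from g
      have hne1 : (⟨g⁻¹ * g', hm⟩ : H) ≠ 1 := by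
        intro hc
        apply hg
        have h2 : g⁻¹ * g' = 1 := congrArg Subtype.val hc
        rw [mul_eq_one_iff_inv_eq] at h2
        simpa using h2.symm
      have hwg : wmap hcont A (genU (χ := χ) hcont hA β i g) g' = 0 := by
        ext a
        rw [wmap_apply, genU, dif_pos hm]
        simp only [ContinuousMap.coe_smul, Pi.smul_apply, smul_eq_mul]
        rw [smulC_apply]
        have hpt : g⁻¹ • g' • (a : X) = ((⟨g⁻¹ * g', hm⟩ : H) : Γ) • (a : X) := by
          rw [smul_smul]
        rw [hpt]
        have hna : (((⟨g⁻¹ * g', hm⟩ : H) : Γ)) • (a : X) ∉ A := by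
          intro hc
          obtain ⟨h₀, hh₀, huniq⟩ := hAf (a : X)
          have e1 : (⟨g⁻¹ * g', hm⟩ : H) = h₀ := huniq _ hc
          have e2 : (1 : H) = h₀ := huniq 1 (by simpa using a.2)
          exact hne1 (e1.trans e2.symm)
        rw [extendZero_apply_not_mem hA _ hna]
        simp
      rw [hwg]
      have hnep : ((i, g) : ι × Γ) ≠ (j, g') := fun hc => hg (congrArg Prod.snd hc).symm
      rw [Finsupp.single_eq_of_ne hnep.symm]
      simp
  · have hgg : g' ≠ g := by
      rintro rfl
      exact hm (by simpa using H.one_mem)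
    have hz : genU (χ := χ) hcont hA β i g g' = 0 := by rw [genU, dif_neg hm]
    rw [wmap_eq_zero hcont A hz]
    have hnep : ((i, g) : ι × Γ) ≠ (j, g') := fun hc => hgg (congrArg Prod.snd hc).symm
    rw [Finsupp.single_eq_of_ne hnep.symm]
    simp

end Main2

end Stmt15Aux
namespace Stmt15Aux

section Main3

variable {Γ : Type*} [Group Γ] {H : Subgroup Γ} {χ : H →* ℤˣ}
variable {X : Type*} [TopologicalSpace X] [MulAction Γ X]
variable (hcont : ∀ γ : Γ, Continuous fun x : X => γ • x)
variable {A : Set X} {ι : Type}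

lemma phi_surjective [Finite H] (hA : IsClopen A) (β : Module.Basis ι ℤ C(A, ℤ))
    (hAf : ∀ x : X, ∃! h : H, (h : Γ) • x ∈ A) :
    Function.Surjective (phiHom (H := H) (χ := χ) hcont A β) := by
  intro v
  induction v using Finsupp.induction_linear with
  | zero => exact ⟨0, map_zero _⟩
  | add f g hf hg =>
    obtain ⟨u, hu⟩ := hf
    obtain ⟨u', hu'⟩ := hg
    exact ⟨u + u', by rw [map_add, hu, hu']⟩
  | single a b =>
    obtain ⟨i, g⟩ := a
    refine ⟨b • ⟨genU (χ := χ) hcont hA β i g, genU_mem hcont hA β i g⟩, ?_⟩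
    rw [map_zsmul, phi_genU hcont hA β hAf i g, Finsupp.smul_single]
    simp

lemma diag_mem [Finite H] (γ : Γ) (u : Γ → C(X, ℤ)) (hu : u ∈ IndMod H χ) :
    diagActInd hcont γ u ∈ (IndMod H χ : AddSubgroup (Γ → C(X, ℤ))) := by
  constructor
  · intro g h
    show smulC hcont γ (u (γ⁻¹ * (g * (h : Γ)))) = (χ h : ℤ) • smulC hcont γ (u (γ⁻¹ * g))
    rw [← mul_assoc, (mem_indMod_iff.mp hu).1 (γ⁻¹ * g) h, smulC_zsmul]
  · have hset : {g : Γ | diagActInd hcont γ u g ≠ 0} = (γ * ·) '' {g : Γ | u g ≠ 0} := by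
      ext g
      simp only [Set.mem_setOf_eq, Set.mem_image, diagActInd]
      constructor
      · intro hne
        refine ⟨γ⁻¹ * g, ?_, by group⟩
        intro h0
        exact hne (by rw [h0]; rfl)
      · rintro ⟨g₀, hg₀, rfl⟩
        intro h0
        have : u (γ⁻¹ * (γ * g₀)) = 0 := (smulC_eq_zero_iff hcont).mp h0
        rw [inv_mul_cancel_left] at this
        exact hg₀ this
    rw [hset, ← Set.image_comp]
    have hcomp : ((QuotientGroup.mk : Γ → Γ ⧸ H) ∘ (γ * ·))
        = (fun q : Γ ⧸ H => γ • q) ∘ (QuotientGroup.mk : Γ → Γ ⧸ H) := by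
      funext g
      show (QuotientGroup.mk (γ * g) : Γ ⧸ H) = γ • (QuotientGroup.mk g : Γ ⧸ H)
      exact (MulAction.Quotient.smul_mk H γ g).symm
    rw [hcomp, Set.image_comp]
    exact ((mem_indMod_iff.mp hu).2).image _

lemma wmap_diag (γ : Γ) (u : Γ → C(X, ℤ)) (g' : Γ) :
    wmap hcont A (diagActInd hcont γ u) g' = wmap hcont A u (γ⁻¹ * g') := by
  ext a
  rw [wmap_apply, wmap_apply]
  show smulC hcont γ (u (γ⁻¹ * g')) (g' • (a : X)) = _
  rw [smulC_apply, smul_smul, mul_smul]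

lemma phi_diag [Finite H] (β : Module.Basis ι ℤ C(A, ℤ)) (γ : Γ)
    (u : (IndMod H χ : AddSubgroup (Γ → C(X, ℤ)))) :
    phiHom (H := H) (χ := χ) hcont A β
        ⟨diagActInd hcont γ u.1, diag_mem hcont γ u.1 u.2⟩
      = transAct ι γ (phiHom (H := H) (χ := χ) hcont A β u) := by
  ext ⟨j, g'⟩
  show β.repr (wmap hcont A (diagActInd hcont γ u.1) g') j = _
  rw [wmap_diag]
  have : transAct ι γ (phiHom (H := H) (χ := χ) hcont A β u) (j, g')
      = phiHom (H := H) (χ := χ) hcont A β u (j, γ⁻¹ * g') := by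
    rw [transAct, Finsupp.equivMapDomain_apply]
    simp
  rw [this]
  rfl

end Main3

end Stmt15Aux
open Stmt15Aux in
/-- Let `H` be a finite subgroup of `Γ`, `χ : H → {±1}` a character, and
`X` a Cantor set with a free `Γ`-action by homeomorphisms such that `C(X;ℤ)` is free abelian
and the `H`-action on `X` has a clopen fundamental domain `A`. Then the `ℤ[Γ]`-module
`C(X;ℤ) ⊗_ℤ (ℤ[Γ] ⊗_{ℤ[H]} ℤ^χ)` (realized as `IndMod H χ`) with the diagonal `Γ`-action is
a free `ℤ[Γ]`-module. -/
theorem tensor_with_induced_character_module_free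
    (Γ : Type*) [Group Γ] (H : Subgroup Γ) [Finite H] (χ : H →* ℤˣ)
    (X : Type*) [TopologicalSpace X] [Nonempty X] [CompactSpace X]
    [TopologicalSpace.MetrizableSpace X] [TotallyDisconnectedSpace X] [PerfectSpace X]
    [MulAction Γ X]
    (hcont : ∀ γ : Γ, Continuous fun x : X => γ • x)
    (hfree : ∀ (γ : Γ) (x : X), γ • x = x → γ = 1)
    (hCfree : Module.Free ℤ C(X, ℤ))
    (hdom : ∃ A : Set X, IsClopen A ∧ ∀ x : X, ∃! h : H, (h : Γ) • x ∈ A) :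
    ∃ hclosed : ∀ (γ : Γ), ∀ u ∈ IndMod H χ,
        diagActInd hcont γ u ∈ (IndMod H χ : AddSubgroup (Γ → C(X, ℤ))),
      ∃ (ι : Type) (e : (IndMod H χ : AddSubgroup (Γ → C(X, ℤ))) ≃+ ((ι × Γ) →₀ ℤ)),
        ∀ (γ : Γ) (u : (IndMod H χ : AddSubgroup (Γ → C(X, ℤ)))),
          e ⟨diagActInd hcont γ (u : Γ → C(X, ℤ)), hclosed γ u u.2⟩ = transAct ι γ (e u) := by
  obtain ⟨A, hA, hAf⟩ := hdom
  haveI : CompactSpace A := isCompact_iff_compactSpace.mp hA.isClosed.isCompact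
  haveI hLCfree : Module.Free ℤ (LocallyConstant A ℤ) :=
    LocallyConstant.freeOfProfinite (Profinite.of A)
  let eLC : LocallyConstant A ℤ ≃+ C(A, ℤ) :=
    { toFun := fun f => f.toContinuousMap
      invFun := fun f => ⟨f, (IsLocallyConstant.iff_continuous (f : A → ℤ)).mpr f.continuous⟩
      left_inv := fun f => rfl
      right_inv := fun f => rfl
      map_add' := fun f g => rfl }
  haveI hCAfree : Module.Free ℤ C(A, ℤ) := Module.Free.of_equiv eLC.toIntLinearEquiv
  haveI : Small.{0} X := small_of_compact_metrizable X
  haveI : Small.{0} A := small_of_injective Subtype.val_injective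
  haveI : Small.{0} C(A, ℤ) :=
    small_of_injective (f := fun (f : C(A, ℤ)) => (f : A → ℤ)) DFunLike.coe_injective
  haveI : Small.{0} (Module.Free.ChooseBasisIndex ℤ C(A, ℤ)) :=
    small_of_injective (Module.Free.chooseBasis ℤ C(A, ℤ)).injective
  let ι : Type := Shrink.{0} (Module.Free.ChooseBasisIndex ℤ C(A, ℤ))
  let β : Module.Basis ι ℤ C(A, ℤ) :=
    (Module.Free.chooseBasis ℤ C(A, ℤ)).reindex (equivShrink _)
  refine ⟨fun γ u hu => diag_mem hcont γ u hu, ι,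
    AddEquiv.ofBijective (phiHom (H := H) (χ := χ) hcont A β)
      ⟨phi_injective hcont β hAf, phi_surjective hcont hA β hAf⟩, ?_⟩
  intro γ u
  exact phi_diag hcont β γ u
end
end

section
/- For a free action of a finite group H by homeomorphisms on a Cantor set X, there exists a clopen fundamental domain: a clopen set A ⊆ X such that the translates {hA : h ∈ H} partition X. -/
open Pointwise

/-- For a free action of a finite group `H` by homeomorphisms on a Cantor
set `X` there is a clopen fundamental domain: a clopen set `A ⊆ X` whose translates
`{h • A : h ∈ H}` partition `X` (equivalently, for every `x` there is a unique `h ∈ H` with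
`h • x ∈ A`). -/
theorem exists_clopen_fundamental_domain_of_finite_free_action
    (H X : Type*) [Group H] [Finite H] [TopologicalSpace X] [Nonempty X] [CompactSpace X]
    [TopologicalSpace.MetrizableSpace X] [TotallyDisconnectedSpace X] [PerfectSpace X]
    [MulAction H X]
    (hcont : ∀ h : H, Continuous fun x : X => h • x)
    (hfree : ∀ (h : H) (x : X), h • x = x → h = 1) :
    ∃ A : Set X, IsClopen A ∧ ∀ x : X, ∃! h : H, h • x ∈ A := by
  classical
  haveI : TotallySeparatedSpace X := loc_compact_t2_tot_disc_iff_tot_sep.mp ‹_›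
  -- Step 1: every point has a clopen neighborhood disjoint from its nontrivial translates.
  have step : ∀ x : X, ∃ U : Set X, x ∈ U ∧ IsClopen U ∧
      ∀ h : H, h ≠ 1 → ∀ y ∈ U, h • y ∉ U := by
    intro x
    have key : ∀ h : H, ∃ V : Set X, IsClopen V ∧ x ∈ V ∧
        (h ≠ 1 → ∀ y ∈ V, h • y ∉ V) := by
      intro h
      by_cases h1 : h = 1
      · exact ⟨Set.univ, isClopen_univ, trivial, fun hc => absurd h1 hc⟩
      · have hne : x ≠ h • x := fun e => h1 (hfree h x e.symm)
        obtain ⟨C, hC, hxC, hhx⟩ := exists_isClopen_of_totally_separated hne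
        refine ⟨C ∩ (fun y => h • y) ⁻¹' Cᶜ, hC.inter (hC.compl.preimage (hcont h)),
          ⟨hxC, hhx⟩, ?_⟩
        intro _ y hy hmem
        exact hy.2 hmem.1
    choose V hVclopen hxV hVgood using key
    refine ⟨⋂ h, V h, Set.mem_iInter.2 hxV, isClopen_iInter_of_finite hVclopen, ?_⟩
    intro h h1 y hy hmem
    exact hVgood h h1 y (Set.mem_iInter.1 hy h) (Set.mem_iInter.1 hmem h)
  choose U hxU hUclopen hUgood using step
  -- Step 2: finite subcover
  obtain ⟨t, ht⟩ := IsCompact.elim_finite_subcover isCompact_univ U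
    (fun x => (hUclopen x).isOpen) (fun x _ => Set.mem_iUnion.2 ⟨x, hxU x⟩)
  -- reindex by naturals
  set L := t.toList with hL
  set n := L.length with hn
  let B : ℕ → Set X := fun i => if hi : i < n then U (L.get ⟨i, hi⟩) else ∅
  have hBclopen : ∀ i, IsClopen (B i) := by
    intro i
    by_cases hi : i < n
    · simp only [B, dif_pos hi]; exact hUclopen _
    · simp only [B, dif_neg hi]; exact isClopen_empty
  have hBgood : ∀ i, ∀ h : H, h ≠ 1 → ∀ y ∈ B i, h • y ∉ B i := by
    intro i h h1 y hy
    by_cases hi : i < n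
    · simp only [B, dif_pos hi] at hy ⊢; exact hUgood _ h h1 y hy
    · simp only [B, dif_neg hi] at hy; exact absurd hy (Set.notMem_empty y)
  have hBcover : ∀ x : X, ∃ i, x ∈ B i := by
    intro x
    obtain ⟨a, hat, hxa⟩ := Set.mem_iUnion₂.1 (ht (Set.mem_univ x))
    obtain ⟨⟨i, hi⟩, hget⟩ := List.mem_iff_get.mp (Finset.mem_toList.mpr hat)
    exact ⟨i, by simp only [B, hn, hL, dif_pos hi]; rw [← hget] at hxa; exact hxa⟩
  -- Step 3: greedy construction
  let W : ℕ → Set X := fun i => B i \ ⋃ j ∈ Finset.range i, ⋃ g : H, g • B j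
  have hWclopen : ∀ i, IsClopen (W i) := by
    intro i
    refine (hBclopen i).diff (isClopen_biUnion_finset fun j _ => ?_)
    refine isClopen_iUnion_of_finite fun g => ?_
    have : g • B j = (fun y : X => g⁻¹ • y) ⁻¹' B j := by
      ext y; simp [Set.mem_smul_set_iff_inv_smul_mem]
    rw [this]
    exact (hBclopen j).preimage (hcont g⁻¹)
  let A : Set X := ⋃ i ∈ Finset.range n, W i
  have hAclopen : IsClopen A := isClopen_biUnion_finset fun i _ => hWclopen i
  -- covering : every orbit meets A
  have hcov : ∀ x : X, ∃ h : H, h • x ∈ A := by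
    have main : ∀ i, ∀ x : X, (∃ h : H, h • x ∈ B i) → ∃ h : H, h • x ∈ A := by
      intro i
      induction i using Nat.strong_induction_on with
      | _ i ih =>
        rintro x ⟨h, hx⟩
        have hin : i < n := by
          by_contra hi
          simp only [B, dif_neg hi] at hx
          exact hx
        by_cases hW : h • x ∈ W i
        · exact ⟨h, Set.mem_biUnion (Finset.mem_range.2 hin) hW⟩
        · have : h • x ∈ ⋃ j ∈ Finset.range i, ⋃ g : H, g • B j := by
            by_contra hc
            exact hW ⟨hx, hc⟩
          obtain ⟨j, hj, hmem⟩ := Set.mem_iUnion₂.1 this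
          obtain ⟨g, hg⟩ := Set.mem_iUnion.1 hmem
          obtain ⟨y, hy, hgy⟩ := hg
          refine ih j (Finset.mem_range.1 hj) x ⟨g⁻¹ * h, ?_⟩
          have : (g⁻¹ * h) • x = y := by
            rw [mul_smul, ← hgy, inv_smul_smul]
          rw [this]; exact hy
    intro x
    obtain ⟨i, hi⟩ := hBcover x
    exact main i x ⟨1, by rwa [one_smul]⟩
  refine ⟨A, hAclopen, fun x => ?_⟩
  obtain ⟨h, hh⟩ := hcov x
  refine ⟨h, hh, fun h' hh' => ?_⟩
  -- uniqueness
  obtain ⟨i, hi, hWi⟩ := Set.mem_iUnion₂.1 hh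
  obtain ⟨j, hj, hWj⟩ := Set.mem_iUnion₂.1 hh'
  by_contra hne
  -- hWi : h • x ∈ W i, hWj : h' • x ∈ W j
  have smulmem : ∀ (a b : H) (k : ℕ), a • x ∈ B k → b • x ∈ (b * a⁻¹) • B k := by
    intro a b k hk
    refine ⟨a • x, hk, ?_⟩
    show (b * a⁻¹) • a • x = b • x
    rw [mul_smul, inv_smul_smul]
  rcases lt_trichotomy i j with hij | hij | hij
  · exact hWj.2 (Set.mem_biUnion (Finset.mem_range.2 hij)
      (Set.mem_iUnion.2 ⟨h' * h⁻¹, smulmem h h' i hWi.1⟩))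
  · subst hij
    have : (h * h'⁻¹) • (h' • x) ∈ B i := by
      have : (h * h'⁻¹) • (h' • x) = h • x := by
        rw [← mul_smul, mul_assoc, inv_mul_cancel, mul_one]
      rw [this]; exact hWi.1
    have hne' : h * h'⁻¹ ≠ 1 := by
      intro e
      exact hne (mul_inv_eq_one.mp e).symm
    exact hBgood i (h * h'⁻¹) hne' (h' • x) hWj.1 this
  · exact hWi.2 (Set.mem_biUnion (Finset.mem_range.2 hij)
      (Set.mem_iUnion.2 ⟨h * h'⁻¹, smulmem h' h j hWj.1⟩))
end
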